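/- arXiv:2406.01166 — 4 statements merged into one kernel-verified Lean document; each statement's English description precedes it below -/
import Mathlib

section
/- For every q ∈ ℂ and every n ≥ 1, the q-fundamental quasisymmetric function indexed by the identity permutation id_n ∈ S_n equals the Hall–Littlewood symmetric function with parameter −q: L^{(q)}_{id_n} = q_n(X; −q). -/
open Classical
noncomputable section

def pmlt (a b : ℤ) : Prop :=
  2 * a.natAbs + (if 0 < a then 1 else 0) < 2 * b.natAbs + (if 0 < b then 1 else 0)

def IsEnriched {n : ℕ} (P : Fin n → Fin n → Prop) (f : Fin n → ℤ) : Prop :=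
  (∀ i, f i ≠ 0) ∧
  ∀ i j, P i j →
    ((i < j → pmlt (f i) (f j) ∨ (f i = f j ∧ 0 < f i)) ∧
     (j < i → pmlt (f i) (f j) ∨ (f i = f j ∧ f i < 0)))

def monomOf {n : ℕ} (f : Fin n → ℤ) : ℕ →₀ ℕ :=
  ∑ i, Finsupp.single ((f i).natAbs - 1) 1

def negCount {n : ℕ} (f : Fin n → ℤ) : ℕ :=
  (Finset.univ.filter fun i => f i < 0).card

def Gamma {n : ℕ} (q : ℂ) (P : Fin n → Fin n → Prop) : MvPowerSeries ℕ ℂ :=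
  fun d => ∑' f : {f : Fin n → ℤ // IsEnriched P f},
    if monomOf f.1 = d then q ^ negCount f.1 else 0

def hh (m : ℕ) : MvPowerSeries ℕ ℂ :=
  fun d => if d.sum (fun _ v => v) = m then 1 else 0

def ee (k : ℕ) : MvPowerSeries ℕ ℂ :=
  fun d => if (d.sum (fun _ v => v) = k ∧ ∀ i, d i ≤ 1) then 1 else 0

def qHL (t : ℂ) (n : ℤ) : MvPowerSeries ℕ ℂ :=
  if n < 0 then 0 else
    ∑ k ∈ Finset.range (n.toNat + 1), ((-t) ^ k) • (ee k * hh (n.toNat - k))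

def SHL (t : ℂ) (l m : ℕ → ℕ) (k : ℕ) : MvPowerSeries ℕ ℂ :=
  Matrix.det (Matrix.of fun i j : Fin k =>
    qHL t ((l i : ℤ) - (m j : ℤ) - (i : ℤ) + (j : ℤ)))

/-- The total order `<_π` on `[n]` (encoded on `Fin n`) given by
`π_1 <_π π_2 <_π ⋯ <_π π_n`. -/
def permOrd {n : ℕ} (π : Equiv.Perm (Fin n)) (i j : Fin n) : Prop :=
  π.symm i < π.symm j

/-- The `q`-fundamental quasisymmetric function `L^{(q)}_π = Γ^{(q)}([n], <_π)`. -/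
def Lq {n : ℕ} (q : ℂ) (π : Equiv.Perm (Fin n)) : MvPowerSeries ℕ ℂ :=
  Gamma q (permOrd π)

/-- The descent set `Des(π) = {i ∈ [n-1] : π_i > π_{i+1}}` of `π ∈ S_n`
(with positions 1-indexed). -/
def DesPerm {n : ℕ} (π : Equiv.Perm (Fin n)) : Finset ℕ :=
  (Finset.range n).filter fun v =>
    ∃ (h1 : v - 1 < n) (h2 : v < n), 1 ≤ v ∧ π ⟨v, h2⟩ < π ⟨v - 1, h1⟩

/-!
For the identity permutation an enriched `P`-partition is a word `f 1 ≤ ⋯ ≤ f n` in `ℙ^±` in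
which only positive letters may repeat. Such a word is determined by its monomial `x^d` together
with the set `S ⊆ supp d` of letters `m` for which `-m` occurs (exactly once, at the start of the
block of `±m`), and it contributes `q ^ #S`. So the coefficient of `x^d` in `L^{(q)}_{id}` is
`∑_{S ⊆ supp d} q ^ #S` when `|d| = n`. This is also the coefficient of `x^d` in
`q_n(X; -q) = ∑_k q^k e_k h_{n-k}`, since the terms of `e_k h_{n-k}` at `x^d` are the splittings
`d = u + v` with `u` the indicator of a `k`-subset of `supp d`.
-/

open Finset

lemma Finsupp.sum_id_eq_degree (d : ℕ →₀ ℕ) : (d.sum fun _ v => v) = d.degree := rfl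

lemma List.count_ofFn {α : Type*} [DecidableEq α] {n : ℕ} (f : Fin n → α) (a : α) :
    (List.ofFn f).count a = #{i | f i = a} := by
  rw [← Multiset.coe_count, ← Fin.univ_val_map, Multiset.count_map]
  simp only [eq_comm (a := a)]
  rfl

lemma Finset.sum_map_sort {α M : Type*} [LinearOrder α] [AddCommMonoid M] (s : Finset α)
    (g : α → M) :
    ((s.sort (· ≤ ·)).map g).sum = ∑ m ∈ s, g m := by
  rw [sum_eq_multiset_sum, ← sort_eq s (· ≤ ·), Multiset.map_coe, Multiset.sum_coe]

lemma sum_antidiagonal_binary_eq_sum_powerset {M : Type*} [AddCommMonoid M] (d : ℕ →₀ ℕ)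
    (g : ℕ → M) :
    ∑ p ∈ antidiagonal d with ∀ i, p.1 i ≤ 1, g p.1.degree = ∑ S ∈ d.support.powerset, g #S := by
  have hind (S : Finset ℕ) (i : ℕ) : S.val.toFinsupp i = if i ∈ S then 1 else 0 := by
    rw [Multiset.toFinsupp_apply, Multiset.count_eq_of_nodup S.nodup]
    rfl
  have hbin (u : ℕ →₀ ℕ) (hu : ∀ i, u i ≤ 1) : u.support.val.toFinsupp = u := by
    ext i
    have := hu i
    simp only [hind, Finsupp.mem_support_iff]
    split_ifs <;> omega
  refine sum_nbij' (fun p => p.1.support) (fun S => (S.val.toFinsupp, d - S.val.toFinsupp))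
    ?_ ?_ ?_ ?_ ?_
  · rintro ⟨u, v⟩ hp
    simp only [mem_filter, HasAntidiagonal.mem_antidiagonal] at hp
    rw [mem_powerset, ← hp.1]
    exact Finsupp.support_mono le_self_add
  · intro S hS
    have hle : S.val.toFinsupp ≤ d := fun i => by
      rw [hind]
      split_ifs with hi
      · exact Nat.one_le_iff_ne_zero.2 (Finsupp.mem_support_iff.1 (mem_powerset.1 hS hi))
      · exact Nat.zero_le _
    simp only [mem_filter, HasAntidiagonal.mem_antidiagonal]
    refine ⟨add_tsub_cancel_of_le hle, fun i => ?_⟩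
    rw [hind]
    split_ifs <;> omega
  · rintro ⟨u, v⟩ hp
    simp only [mem_filter, HasAntidiagonal.mem_antidiagonal] at hp
    simp only [hbin u hp.2, ← hp.1, add_tsub_cancel_left]
  · intro S _
    simp [Multiset.toFinsupp_support]
  · rintro ⟨u, v⟩ hp
    simp only [mem_filter] at hp
    dsimp only
    congr 1
    rw [Finsupp.degree_apply, card_eq_sum_ones]
    exact sum_congr rfl fun i hi => by
      have := Finsupp.mem_support_iff.1 hi
      have := hp.2 i
      omega

lemma sum_range_ite_and_eq_sub {M : Type*} [AddCommMonoid M] (n a b : ℕ) (P : Prop)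
    [Decidable P] (g : ℕ → M) :
    ∑ k ∈ range (n + 1), (if (a = k ∧ P) ∧ b = n - k then g k else 0) =
      if a + b = n ∧ P then g a else 0 := by
  have hterm (k : ℕ) : (if (a = k ∧ P) ∧ b = n - k then g k else 0) =
      if a = k then (if P ∧ b = n - a then g a else 0) else 0 := by
    by_cases h : a = k
    · subst h
      simp only [true_and, if_true]
    · simp only [h, false_and, if_false]
  rw [sum_congr rfl fun k _ => hterm k, sum_ite_eq]
  by_cases hP : P
  · simp only [hP, true_and, and_true, mem_range]
    split_ifs <;> first | rfl | omega
  · simp only [hP, false_and, and_false, if_false, ite_self]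

lemma qHL_neg_natCast (q : ℂ) (n : ℕ) :
    qHL (-q) n = ∑ k ∈ range (n + 1), q ^ k • (ee k * hh (n - k)) := by
  simp [qHL]

lemma coeff_qHL_neg (q : ℂ) (n : ℕ) (d : ℕ →₀ ℕ) :
    MvPowerSeries.coeff d (qHL (-q) n) =
      if d.degree = n then ∑ S ∈ d.support.powerset, q ^ #S else 0 := by
  have hsplit (p) (hp : p ∈ antidiagonal d) : p.1.degree + p.2.degree = d.degree := by
    rw [← map_add, HasAntidiagonal.mem_antidiagonal.1 hp]
  calc MvPowerSeries.coeff d (qHL (-q) n)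
      = ∑ p ∈ antidiagonal d, ∑ k ∈ range (n + 1),
          if (p.1.degree = k ∧ ∀ i, p.1 i ≤ 1) ∧ p.2.degree = n - k then q ^ k else 0 := by
        rw [qHL_neg_natCast]
        simp only [map_sum, MvPowerSeries.coeff_smul, MvPowerSeries.coeff_mul, mul_sum]
        rw [sum_comm]
        refine sum_congr rfl fun p _ => sum_congr rfl fun k _ => ?_
        rw [MvPowerSeries.coeff_apply, MvPowerSeries.coeff_apply]
        simp only [ee, hh, Finsupp.sum_id_eq_degree]
        by_cases h1 : p.1.degree = k ∧ ∀ i, p.1 i ≤ 1 <;>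
          by_cases h2 : p.2.degree = n - k <;> simp [h1, h2]
    _ = ∑ p ∈ antidiagonal d, if d.degree = n ∧ ∀ i, p.1 i ≤ 1 then q ^ p.1.degree else 0 := by
        refine sum_congr rfl fun p hp => ?_
        rw [sum_range_ite_and_eq_sub, hsplit p hp]
    _ = _ := by
        split_ifs with hd
        · simp only [hd, true_and]
          rw [← sum_filter, sum_antidiagonal_binary_eq_sum_powerset]
        · simp [hd]

lemma pmlt_of_natAbs_lt {a b : ℤ} (h : a.natAbs < b.natAbs) : pmlt a b := by
  unfold pmlt
  split_ifs <;> omega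

lemma pmlt_neg_self {a : ℤ} (ha : 0 < a) : pmlt (-a) a := by
  unfold pmlt
  split_ifs <;> omega

/-- The condition on `(f i, f j)` for `i < j` in an enriched `P`-partition of a chain. -/
def EnrichedRel (a b : ℤ) : Prop := pmlt a b ∨ (a = b ∧ 0 < a)

lemma EnrichedRel.antisymm {a b : ℤ} (hab : EnrichedRel a b) (hba : EnrichedRel b a) :
    a = b := by
  rcases hab with hab | hab
  · rcases hba with hba | hba
    · unfold pmlt at hab hba
      omega
    · exact hba.1.symm
  · exact hab.1

lemma isEnriched_one_iff {n : ℕ} (f : Fin n → ℤ) :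
    IsEnriched (permOrd (1 : Equiv.Perm (Fin n))) f ↔
      (∀ i, f i ≠ 0) ∧ (List.ofFn f).Pairwise EnrichedRel := by
  rw [List.pairwise_ofFn]
  refine and_congr_right fun _ => ⟨fun h i j hij => (h i j hij).1 hij, fun h i j hij => ?_⟩
  have hij : i < j := hij
  exact ⟨fun _ => h hij, fun hji => absurd hij hji.not_gt⟩

section enrichedWord

variable {n : ℕ} {f : Fin n → ℤ}

def negSet (f : Fin n → ℤ) : Finset ℕ :=
  (univ.filter fun i => f i < 0).image fun i => (f i).natAbs - 1

lemma IsEnriched.eq_of_eq_of_neg (he : IsEnriched (permOrd (1 : Equiv.Perm (Fin n))) f)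
    {i j : Fin n} (hij : f i = f j) (hneg : f i < 0) : i = j := by
  have hirr {a b : ℤ} (hab : a = b) (ha : a < 0) : ¬ EnrichedRel a b := by
    rintro (h | h)
    · subst hab
      exact lt_irrefl _ h
    · omega
  have hR := List.pairwise_ofFn.1 ((isEnriched_one_iff f).1 he).2
  rcases lt_trichotomy i j with h | h | h
  · exact absurd (hR h) (hirr hij hneg)
  · exact h
  · exact absurd (hR h) (hirr hij.symm (hij ▸ hneg))

lemma IsEnriched.negCount_eq_card_negSet
    (he : IsEnriched (permOrd (1 : Equiv.Perm (Fin n))) f) : negCount f = #(negSet f) := by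
  refine (card_image_of_injOn fun i hi j hj hij => he.eq_of_eq_of_neg ?_ ?_).symm
  all_goals simp only [coe_filter, mem_univ, true_and, Set.mem_ofPred_eq] at hi hj hij
  all_goals omega

lemma IsEnriched.count_neg (he : IsEnriched (permOrd (1 : Equiv.Perm (Fin n))) f) (m : ℕ) :
    (List.ofFn f).count (-((m : ℤ) + 1)) = if m ∈ negSet f then 1 else 0 := by
  rw [List.count_ofFn]
  split_ifs with hm
  · obtain ⟨i, hi, him⟩ := mem_image.1 hm
    rw [mem_filter] at hi
    have hfi : f i = -((m : ℤ) + 1) := by omega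
    rw [card_eq_one]
    refine ⟨i, eq_singleton_iff_unique_mem.2 ⟨by simp [hfi], fun j hj => ?_⟩⟩
    rw [mem_filter] at hj
    exact he.eq_of_eq_of_neg (hj.2.trans hfi.symm) (by omega)
  · refine card_eq_zero.2 (filter_eq_empty_iff.2 fun i _ hi => hm (mem_image.2 ⟨i, ?_, ?_⟩))
    · simp [hi]; omega
    · omega

lemma monomOf_apply (h0 : ∀ i, f i ≠ 0) (m : ℕ) :
    monomOf f m = (List.ofFn f).count ((m : ℤ) + 1) + (List.ofFn f).count (-((m : ℤ) + 1)) := by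
  rw [List.count_ofFn, List.count_ofFn, ← card_union_of_disjoint]
  · rw [← filter_or, monomOf, Finsupp.finsetSum_apply, card_filter]
    refine sum_congr rfl fun i _ => ?_
    rw [Finsupp.single_apply]
    have := h0 i
    congr 1
    simp only [eq_iff_iff]
    omega
  · exact disjoint_filter.2 fun i _ h => by omega

lemma degree_monomOf (f : Fin n → ℤ) : (monomOf f).degree = n := by
  simp [monomOf]

lemma IsEnriched.negSet_subset (he : IsEnriched (permOrd (1 : Equiv.Perm (Fin n))) f) :
    negSet f ⊆ (monomOf f).support := by
  intro m hm
  have h0 := ((isEnriched_one_iff f).1 he).1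
  have hcount := he.count_neg m
  rw [if_pos hm] at hcount
  rw [Finsupp.mem_support_iff, monomOf_apply h0]
  omega

end enrichedWord

section enrichedList

variable (d : ℕ →₀ ℕ) (S : Finset ℕ)

/-- Index `m` of a monomial `d : ℕ →₀ ℕ` is the letter `±(m + 1)` (cf. `monomOf`). -/
def enrichedBlock (m : ℕ) : List ℤ :=
  if m ∈ S then -((m : ℤ) + 1) :: List.replicate (d m - 1) ((m : ℤ) + 1)
  else List.replicate (d m) ((m : ℤ) + 1)

def enrichedList : List ℤ :=
  (d.support.sort (· ≤ ·)).flatMap (enrichedBlock d S)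

variable {d S}

lemma mem_enrichedBlock {m : ℕ} {a : ℤ} (ha : a ∈ enrichedBlock d S m) :
    a = -((m : ℤ) + 1) ∨ a = (m : ℤ) + 1 := by
  unfold enrichedBlock at ha
  split_ifs at ha
  · rcases List.mem_cons.1 ha with h | h
    · exact Or.inl h
    · exact Or.inr (List.eq_of_mem_replicate h)
  · exact Or.inr (List.eq_of_mem_replicate ha)

lemma length_enrichedList : (enrichedList d S).length = d.degree := by
  rw [enrichedList, List.length_flatMap, sum_map_sort, Finsupp.degree_apply]
  refine sum_congr rfl fun m hm => ?_
  have := Finsupp.mem_support_iff.1 hm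
  unfold enrichedBlock
  split_ifs
  · rw [List.length_cons, List.length_replicate]
    omega
  · exact List.length_replicate

variable (d S) in
lemma pairwise_enrichedList : (enrichedList d S).Pairwise EnrichedRel := by
  rw [enrichedList, List.pairwise_flatMap]
  refine ⟨fun m _ => ?_, ((sortedLT_sort d.support).pairwise).imp fun hmm' a ha b hb => ?_⟩
  · unfold enrichedBlock
    have hrep (k : ℕ) : (List.replicate k ((m : ℤ) + 1)).Pairwise EnrichedRel :=
      List.pairwise_replicate.2 (Or.inr (Or.inr ⟨rfl, by omega⟩))
    split_ifs
    · refine List.pairwise_cons.2 ⟨fun a ha => ?_, hrep _⟩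
      rw [List.eq_of_mem_replicate ha]
      exact Or.inl (pmlt_neg_self (by omega))
    · exact hrep _
  · refine Or.inl (pmlt_of_natAbs_lt ?_)
    rcases mem_enrichedBlock ha with rfl | rfl <;> rcases mem_enrichedBlock hb with rfl | rfl <;>
      omega

lemma count_enrichedList_zero : (enrichedList d S).count 0 = 0 := by
  refine List.count_eq_zero.2 fun h => ?_
  obtain ⟨m, _, hm⟩ := List.mem_flatMap.1 h
  rcases mem_enrichedBlock hm with h | h <;> omega

lemma count_enrichedList (a : ℤ) :
    (enrichedList d S).count a = ∑ m ∈ d.support, (enrichedBlock d S m).count a := by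
  rw [enrichedList, List.count_flatMap, ← sum_map_sort]
  rfl

lemma count_enrichedBlock_of_ne {m : ℕ} {a : ℤ} (ha : a.natAbs ≠ m + 1) :
    (enrichedBlock d S m).count a = 0 :=
  List.count_eq_zero.2 fun h => by rcases mem_enrichedBlock h with rfl | rfl <;> omega

lemma count_enrichedList_pos (m : ℕ) :
    (enrichedList d S).count ((m : ℤ) + 1) = d m - if m ∈ S then 1 else 0 := by
  rw [count_enrichedList, sum_eq_single m (fun m' _ h => count_enrichedBlock_of_ne (by omega))]
  · unfold enrichedBlock
    split_ifs
    · simp [List.count_cons]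
      omega
    · simp
  · intro hm
    unfold enrichedBlock
    split_ifs
    · simp [Finsupp.notMem_support_iff.1 hm, List.count_cons]
      omega
    · simp [Finsupp.notMem_support_iff.1 hm]

lemma count_enrichedList_neg (hS : S ⊆ d.support) (m : ℕ) :
    (enrichedList d S).count (-((m : ℤ) + 1)) = if m ∈ S then 1 else 0 := by
  rw [count_enrichedList, sum_eq_single m (fun m' _ h => count_enrichedBlock_of_ne (by omega))]
  · unfold enrichedBlock
    split_ifs
    · simp [List.count_replicate]
      omega
    · simp [List.count_replicate]
      omega
  · intro hm
    have hmS : m ∉ S := fun h => hm (hS h)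
    unfold enrichedBlock
    simp [hmS, List.count_replicate]
    omega

end enrichedList

lemma IsEnriched.ofFn_eq_enrichedList {n : ℕ} {f : Fin n → ℤ}
    (he : IsEnriched (permOrd (1 : Equiv.Perm (Fin n))) f) :
    List.ofFn f = enrichedList (monomOf f) (negSet f) := by
  obtain ⟨h0, hsorted⟩ := (isEnriched_one_iff f).1 he
  refine List.Perm.eq_of_pairwise (fun _ _ _ _ => EnrichedRel.antisymm) hsorted
    (pairwise_enrichedList _ _) (List.perm_iff_count.2 fun a => ?_)
  obtain ⟨m, rfl | rfl⟩ | rfl : (∃ m : ℕ, a = (m : ℤ) + 1 ∨ a = -((m : ℤ) + 1)) ∨ a = 0 := by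
    rcases lt_trichotomy a 0 with h | h | h
    · exact Or.inl ⟨a.natAbs - 1, Or.inr (by omega)⟩
    · exact Or.inr h
    · exact Or.inl ⟨a.natAbs - 1, Or.inl (by omega)⟩
  · rw [count_enrichedList_pos, monomOf_apply h0, he.count_neg]
    omega
  · rw [count_enrichedList_neg he.negSet_subset, he.count_neg]
  · rw [count_enrichedList_zero, List.count_eq_zero]
    rintro h
    obtain ⟨i, hi⟩ := List.mem_ofFn.1 h
    exact h0 i hi

def enrichedFun (n : ℕ) (d : ℕ →₀ ℕ) (S : Finset ℕ) : Fin n → ℤ :=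
  fun i => (enrichedList d S).getD i 0

section enrichedFun

variable {n : ℕ} {d : ℕ →₀ ℕ} {S : Finset ℕ}

lemma ofFn_enrichedFun (hd : d.degree = n) :
    List.ofFn (enrichedFun n d S) = enrichedList d S := by
  refine List.ext_getElem (by simp [length_enrichedList, hd]) fun i _ h => ?_
  rw [List.getElem_ofFn, enrichedFun, List.getD_eq_getElem _ _ h]

lemma isEnriched_enrichedFun (hd : d.degree = n) :
    IsEnriched (permOrd (1 : Equiv.Perm (Fin n))) (enrichedFun n d S) := by
  rw [isEnriched_one_iff, ofFn_enrichedFun hd]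
  refine ⟨fun i h => ?_, pairwise_enrichedList d S⟩
  have hmem : (0 : ℤ) ∈ enrichedList d S := by
    rw [← ofFn_enrichedFun hd, ← h]
    exact List.mem_ofFn.2 ⟨i, rfl⟩
  exact List.count_pos_iff.2 hmem |>.ne' count_enrichedList_zero

lemma monomOf_enrichedFun (hd : d.degree = n) (hS : S ⊆ d.support) :
    monomOf (enrichedFun n d S) = d := by
  ext m
  rw [monomOf_apply ((isEnriched_one_iff _).1 (isEnriched_enrichedFun hd)).1, ofFn_enrichedFun hd,
    count_enrichedList_pos, count_enrichedList_neg hS]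
  split_ifs with hm
  · have := Finsupp.mem_support_iff.1 (hS hm)
    omega
  · rfl

lemma negSet_enrichedFun (hd : d.degree = n) (hS : S ⊆ d.support) :
    negSet (enrichedFun n d S) = S := by
  ext m
  have h := (isEnriched_enrichedFun (S := S) hd).count_neg m
  rw [ofFn_enrichedFun hd, count_enrichedList_neg hS] at h
  split_ifs at h <;> tauto

lemma IsEnriched.eq_enrichedFun {f : Fin n → ℤ}
    (he : IsEnriched (permOrd (1 : Equiv.Perm (Fin n))) f) :
    f = enrichedFun n (monomOf f) (negSet f) :=
  List.ofFn_injective (by rw [ofFn_enrichedFun (degree_monomOf f), he.ofFn_eq_enrichedList])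

end enrichedFun

lemma coeff_Lq_one (q : ℂ) (n : ℕ) (d : ℕ →₀ ℕ) :
    MvPowerSeries.coeff d (Lq q (1 : Equiv.Perm (Fin n))) =
      if d.degree = n then ∑ S ∈ d.support.powerset, q ^ #S else 0 := by
  rw [MvPowerSeries.coeff_apply, Lq, Gamma]
  split_ifs with hd
  · rw [tsum_eq_sum (s := d.support.powerset.image fun S =>
      ⟨enrichedFun n d S, isEnriched_enrichedFun hd⟩)]
    · rw [sum_image fun S hS S' hS' h => ?_]
      · refine sum_congr rfl fun S hS => ?_
        rw [mem_powerset] at hS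
        rw [if_pos (monomOf_enrichedFun hd hS), (isEnriched_enrichedFun hd).negCount_eq_card_negSet,
          negSet_enrichedFun hd hS]
      · rw [← negSet_enrichedFun hd (mem_powerset.1 hS),
          ← negSet_enrichedFun hd (mem_powerset.1 hS')]
        have := congrArg Subtype.val h
        dsimp only at this
        rw [this]
    · rintro ⟨f, he⟩ hf
      refine if_neg fun hfd => hf (mem_image.2 ⟨negSet f, ?_, ?_⟩)
      · subst hfd
        exact mem_powerset.2 he.negSet_subset
      · subst hfd
        exact Subtype.ext he.eq_enrichedFun.symm
  · refine (tsum_congr fun f => if_neg fun hfd => hd ?_).trans tsum_zero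
    rw [← hfd, degree_monomOf]

theorem Lq_id_eq_qHL_general (q : ℂ) (n : ℕ) :
    Lq q (1 : Equiv.Perm (Fin n)) = qHL (-q) (n : ℤ) := by
  ext d
  rw [coeff_Lq_one, coeff_qHL_neg]

/-- for every `q ∈ ℂ` and every `n ≥ 1`,
`L^{(q)}_{id_n} = q_n(X; -q)`. -/
theorem Lq_id_eq_qHL (q : ℂ) (n : ℕ) (hn : 1 ≤ n) :
    Lq q (1 : Equiv.Perm (Fin n)) = qHL (-q) (n : ℤ) :=
  Lq_id_eq_qHL_general q n
end
end

section
/- Let q ∈ ℂ, π ∈ S_n and σ ∈ S_m. Then L^{(q)}_π · L^{(q)}_σ = ∑_{τ ∈ π ⧢ σ̄} L^{(q)}_τ, where σ̄ denotes the word (n+σ_1, n+σ_2, …, n+σ_m) and π ⧢ σ̄ is the set of all permutations of S_{n+m} obtained as shuffles (interleavings) of the word π_1 π_2 ⋯ π_n with the word σ̄, each word keeping its relative order. -/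
open Classical
noncomputable section

/-- `τ ∈ S_{n+m}` is a shuffle of the word `π_1 ⋯ π_n` with the word
`σ̄ = (n+σ_1, …, n+σ_m)`: there are strictly increasing sequences of positions
`a` and `b` along which the word of `τ` reads `π`, respectively `σ̄`
(each word keeping its relative order). -/
def IsShuffle {n m : ℕ} (π : Equiv.Perm (Fin n)) (σ : Equiv.Perm (Fin m))
    (τ : Equiv.Perm (Fin (n + m))) : Prop :=
  ∃ (a : Fin n → Fin (n + m)) (b : Fin m → Fin (n + m)),
    StrictMono a ∧ StrictMono b ∧
    (∀ i, (τ (a i) : ℕ) = (π i : ℕ)) ∧ (∀ j, (τ (b j) : ℕ) = n + (σ j : ℕ))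

/-!
A nowhere-zero `f : Fin k → ℤ` orders the positions `Fin k`: first by the value `f i` in the
order `-1 < 1 < -2 < 2 < ⋯` of `ℙ^±`, then, among equal values, increasingly by position if the
value is positive and decreasingly if it is negative. Unfolding the definition, `f` is an enriched
`<_τ`-partition exactly when `τ` lists the positions in this order. Hence every enriched
`P`-partition is an enriched `<_τ`-partition for exactly one linear extension `τ` of `P`, and
`Γ(P) = ∑_τ L_τ` over the linear extensions of `P` (Stembridge's fundamental lemma).

Concatenation identifies pairs of enriched `<_π`- and `<_σ`-partitions with enriched partitions of
the disjoint union of the chains `<_π` and `<_σ` shifted by `n`, so `L_π L_σ` is the generating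
function of that poset, and its linear extensions are exactly the shuffles of `π` and `σ̄`.
-/

open Finset

section Enriched

variable {k : ℕ} {α : Type*} [LinearOrder α]

lemma forall_permOrd_imp_iff {τ : Equiv.Perm (Fin k)} {R : Fin k → Fin k → Prop} :
    (∀ i j, permOrd τ i j → R i j) ↔ ∀ a b, a < b → R (τ a) (τ b) :=
  ⟨fun h a b hab => h _ _ (by simpa [permOrd] using hab),
    fun h i j hij => by simpa using h _ _ hij⟩

lemma permOrd_sort_iff {g : Fin k → α} (hg : Function.Injective g) {i j : Fin k} :
    permOrd (Tuple.sort g) i j ↔ g i < g j := by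
  have hs : StrictMono (g ∘ Tuple.sort g) :=
    (Tuple.monotone_sort g).strictMono_of_injective (hg.comp (Equiv.injective _))
  simpa [permOrd] using
    (hs.lt_iff_lt (a := (Tuple.sort g).symm i) (b := (Tuple.sort g).symm j)).symm

lemma forall_permOrd_imp_lt_iff_eq_sort {g : Fin k → α} (hg : Function.Injective g)
    {τ : Equiv.Perm (Fin k)} : (∀ i j, permOrd τ i j → g i < g j) ↔ τ = Tuple.sort g := by
  constructor
  · intro h
    have hτ : StrictMono (g ∘ τ) := forall_permOrd_imp_iff.1 h
    exact Tuple.eq_sort_iff.2 ⟨hτ.monotone, fun i j hij he => absurd he (hτ hij).ne⟩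
  · rintro rfl i j
    exact (permOrd_sort_iff hg).1

def pmRank (a : ℤ) : ℕ := 2 * a.natAbs + if 0 < a then 1 else 0

lemma pmlt_iff_pmRank_lt {a b : ℤ} : pmlt a b ↔ pmRank a < pmRank b := Iff.rfl

lemma pmRank_injective : Function.Injective pmRank := by
  intro a b h
  unfold pmRank at h
  split_ifs at h <;> omega

def enrichedKey (f : Fin k → ℤ) (i : Fin k) : ℕ ×ₗ ℤ :=
  toLex (pmRank (f i), if 0 < f i then (i : ℤ) else -(i : ℤ))

lemma enrichedKey_injective (f : Fin k → ℤ) : Function.Injective (enrichedKey f) := by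
  intro i j h
  simp only [enrichedKey, toLex_inj, Prod.mk.injEq] at h
  obtain ⟨hr, hi⟩ := h
  rw [pmRank_injective hr] at hi
  ext
  split_ifs at hi <;> omega

lemma enrichedKey_lt_iff {f : Fin k → ℤ} {i j : Fin k} (hi : f i ≠ 0) (hij : i ≠ j) :
    enrichedKey f i < enrichedKey f j ↔
      (i < j → pmlt (f i) (f j) ∨ (f i = f j ∧ 0 < f i)) ∧
      (j < i → pmlt (f i) (f j) ∨ (f i = f j ∧ f i < 0)) := by
  rw [enrichedKey, enrichedKey, Prod.Lex.toLex_lt_toLex, ← pmlt_iff_pmRank_lt,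
    pmRank_injective.eq_iff, Fin.lt_def, Fin.lt_def]
  have := Fin.val_ne_of_ne hij
  by_cases he : f i = f j
  · rw [← he, pmlt_iff_pmRank_lt]
    split_ifs <;> omega
  · have := this.lt_or_gt
    simp only [he, false_and, or_false]
    tauto

lemma isEnriched_iff_enrichedKey_lt {P : Fin k → Fin k → Prop} (hP : ∀ i, ¬ P i i)
    {f : Fin k → ℤ} :
    IsEnriched P f ↔ (∀ i, f i ≠ 0) ∧ ∀ i j, P i j → enrichedKey f i < enrichedKey f j :=
  and_congr_right fun hf => forall₂_congr fun i j => imp_congr_right fun hij =>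
    (enrichedKey_lt_iff (hf i) fun h : i = j => hP j (h ▸ hij)).symm

lemma permOrd_irrefl (τ : Equiv.Perm (Fin k)) (i : Fin k) : ¬ permOrd τ i i :=
  lt_irrefl (τ.symm i)

lemma isEnriched_permOrd_iff {τ : Equiv.Perm (Fin k)} {f : Fin k → ℤ} :
    IsEnriched (permOrd τ) f ↔ (∀ i, f i ≠ 0) ∧ τ = Tuple.sort (enrichedKey f) := by
  rw [isEnriched_iff_enrichedKey_lt (permOrd_irrefl τ),
    forall_permOrd_imp_lt_iff_eq_sort (enrichedKey_injective f)]

lemma IsEnriched.mono {P Q : Fin k → Fin k → Prop} {f : Fin k → ℤ}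
    (hPQ : ∀ i j, P i j → Q i j) (hf : IsEnriched Q f) : IsEnriched P f :=
  ⟨hf.1, fun i j hij => hf.2 i j (hPQ i j hij)⟩

def IsLinearExtension (P : Fin k → Fin k → Prop) (τ : Equiv.Perm (Fin k)) : Prop :=
  ∀ i j, P i j → permOrd τ i j

lemma isLinearExtension_sort_enrichedKey {P : Fin k → Fin k → Prop} (hP : ∀ i, ¬ P i i)
    {f : Fin k → ℤ} (hf : IsEnriched P f) :
    IsLinearExtension P (Tuple.sort (enrichedKey f)) := fun i j hij =>
  (permOrd_sort_iff (enrichedKey_injective f)).2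
    (((isEnriched_iff_enrichedKey_lt hP).1 hf).2 i j hij)

lemma isEnriched_permOrd_iff_of_isLinearExtension {P : Fin k → Fin k → Prop}
    {τ : Equiv.Perm (Fin k)} (hτ : IsLinearExtension P τ) {f : Fin k → ℤ} :
    IsEnriched (permOrd τ) f ↔ IsEnriched P f ∧ Tuple.sort (enrichedKey f) = τ := by
  refine ⟨fun hf => ⟨hf.mono hτ, (isEnriched_permOrd_iff.1 hf).2.symm⟩, ?_⟩
  rintro ⟨hf, rfl⟩
  exact isEnriched_permOrd_iff.2 ⟨hf.1, rfl⟩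

lemma natAbs_sub_one_mem_support_monomOf (f : Fin k → ℤ) (i : Fin k) :
    (f i).natAbs - 1 ∈ (monomOf f).support := by
  have hle : Finsupp.single ((f i).natAbs - 1) 1 ≤ monomOf f :=
    Finset.single_le_sum (f := fun j => Finsupp.single ((f j).natAbs - 1) 1)
      (fun _ _ => zero_le) (mem_univ i)
  have := hle ((f i).natAbs - 1)
  rw [Finsupp.single_eq_same] at this
  exact Finsupp.mem_support_iff.2 (by omega)

lemma finite_setOf_monomOf_eq (d : ℕ →₀ ℕ) :
    {f : Fin k → ℤ | monomOf f = d}.Finite := by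
  set N : ℤ := d.support.sup id + 1
  refine (Set.Finite.pi' fun _ => Set.finite_Icc (-N) N).subset fun f hf i => ?_
  have := Finset.le_sup (f := id) (hf ▸ natAbs_sub_one_mem_support_monomOf f i)
  simp only [Set.mem_Icc, N, id] at this ⊢
  omega

def enrichedFinset (P : Fin k → Fin k → Prop) (d : ℕ →₀ ℕ) : Finset (Fin k → ℤ) :=
  (finite_setOf_monomOf_eq d).toFinset.filter (IsEnriched P)

lemma mem_enrichedFinset {P : Fin k → Fin k → Prop} {d : ℕ →₀ ℕ} {f : Fin k → ℤ} :
    f ∈ enrichedFinset P d ↔ monomOf f = d ∧ IsEnriched P f := by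
  simp [enrichedFinset]

lemma coeff_Gamma (q : ℂ) (P : Fin k → Fin k → Prop) (d : ℕ →₀ ℕ) :
    MvPowerSeries.coeff d (Gamma q P) = ∑ f ∈ enrichedFinset P d, q ^ negCount f := by
  rw [MvPowerSeries.coeff_apply, Gamma]
  refine (tsum_subtype {f | IsEnriched P f}
    (fun f => if monomOf f = d then q ^ negCount f else 0)).trans ?_
  rw [tsum_eq_sum (s := enrichedFinset P d)]
  · refine sum_congr rfl fun f hf => ?_
    rw [mem_enrichedFinset] at hf
    simp [hf.1, hf.2]
  · intro f hf
    rw [mem_enrichedFinset] at hf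
    by_cases he : monomOf f = d <;> simp_all

theorem Gamma_eq_sum_linearExtension (q : ℂ) {P : Fin k → Fin k → Prop}
    (hP : ∀ i, ¬ P i i) :
    Gamma q P = ∑ τ ∈ univ.filter (IsLinearExtension P), Gamma q (permOrd τ) := by
  ext d
  rw [coeff_Gamma, map_sum, ← sum_fiberwise_of_maps_to (g := fun f => Tuple.sort (enrichedKey f))
    (t := univ.filter (IsLinearExtension P))]
  · refine sum_congr rfl fun τ hτ => ?_
    rw [coeff_Gamma]
    refine sum_congr (ext fun f => ?_) fun _ _ => rfl
    rw [mem_filter, mem_enrichedFinset, mem_enrichedFinset,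
      isEnriched_permOrd_iff_of_isLinearExtension (mem_filter.1 hτ).2, and_assoc]
  · intro f hf
    exact mem_filter.2 ⟨mem_univ _,
      isLinearExtension_sort_enrichedKey hP (mem_enrichedFinset.1 hf).2⟩

end Enriched

section Append

variable {n m : ℕ}

def appendRel (P : Fin n → Fin n → Prop) (Q : Fin m → Fin m → Prop) (i j : Fin (n + m)) : Prop :=
  Sum.LiftRel P Q (finSumFinEquiv.symm i) (finSumFinEquiv.symm j)

lemma appendRel_irrefl {P : Fin n → Fin n → Prop} {Q : Fin m → Fin m → Prop}
    (hP : ∀ i, ¬ P i i) (hQ : ∀ i, ¬ Q i i) (i : Fin (n + m)) : ¬ appendRel P Q i i := by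
  unfold appendRel
  generalize finSumFinEquiv.symm i = x
  rintro (⟨h⟩ | ⟨h⟩)
  exacts [hP _ h, hQ _ h]

lemma monomOf_append (f : Fin n → ℤ) (g : Fin m → ℤ) :
    monomOf (Fin.append f g) = monomOf f + monomOf g := by
  simp [monomOf, Fin.sum_univ_add]

lemma negCount_append (f : Fin n → ℤ) (g : Fin m → ℤ) :
    negCount (Fin.append f g) = negCount f + negCount g := by
  simp only [negCount, card_filter, Fin.sum_univ_add, Fin.append_left, Fin.append_right]

lemma isEnriched_appendRel_append {P : Fin n → Fin n → Prop} {Q : Fin m → Fin m → Prop}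
    {f : Fin n → ℤ} {g : Fin m → ℤ} :
    IsEnriched (appendRel P Q) (Fin.append f g) ↔ IsEnriched P f ∧ IsEnriched Q g := by
  simp only [IsEnriched, appendRel, Fin.forall_fin_add, Fin.append_left, Fin.append_right,
    finSumFinEquiv_symm_apply_castAdd, finSumFinEquiv_symm_apply_natAdd, Sum.liftRel_inl_inl,
    Sum.liftRel_inr_inr, Sum.not_liftRel_inl_inr, Sum.not_liftRel_inr_inl,
    (Fin.strictMono_castAdd m).lt_iff_lt, Fin.natAdd_lt_natAdd_iff, false_imp_iff, implies_true,
    and_true, true_and]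
  exact and_and_and_comm

theorem Gamma_mul_Gamma (q : ℂ) (P : Fin n → Fin n → Prop) (Q : Fin m → Fin m → Prop) :
    Gamma q P * Gamma q Q = Gamma q (appendRel P Q) := by
  ext d
  rw [MvPowerSeries.coeff_mul, coeff_Gamma,
    ← sum_fiberwise_of_maps_to (t := HasAntidiagonal.antidiagonal d)
      (g := fun h => Prod.map monomOf monomOf ((Fin.appendEquiv n m).symm h))]
  · refine sum_congr rfl fun p hp => ?_
    rw [coeff_Gamma, coeff_Gamma, sum_mul_sum, ← sum_product']
    refine sum_equiv (Fin.appendEquiv n m) (fun ⟨f, g⟩ => ?_) (fun ⟨f, g⟩ _ => ?_)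
    · obtain ⟨⟨d₁, d₂⟩, rfl⟩ : ∃ p' : _ × _, p = p' := ⟨p, rfl⟩
      rw [HasAntidiagonal.mem_antidiagonal] at hp
      dsimp only [Fin.appendEquiv, Equiv.coe_fn_mk, Equiv.coe_fn_symm_mk, Prod.map] at hp ⊢
      simp only [mem_filter, mem_product, mem_enrichedFinset, monomOf_append,
        isEnriched_appendRel_append, Fin.append_left, Fin.append_right, Prod.mk.injEq, ← hp]
      constructor
      · rintro ⟨⟨rfl, hf⟩, rfl, hg⟩
        exact ⟨⟨rfl, hf, hg⟩, rfl, rfl⟩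
      · rintro ⟨⟨-, hf, hg⟩, rfl, rfl⟩
        exact ⟨⟨rfl, hf⟩, rfl, hg⟩
    · dsimp only [Fin.appendEquiv, Equiv.coe_fn_mk]
      rw [negCount_append, pow_add]
  · intro h hh
    obtain ⟨⟨f, g⟩, rfl⟩ := (Fin.appendEquiv n m).surjective h
    rw [Equiv.symm_apply_apply, HasAntidiagonal.mem_antidiagonal, ← (mem_enrichedFinset.1 hh).1]
    exact (monomOf_append f g).symm

end Append

lemma isShuffle_iff {n m : ℕ} {π : Equiv.Perm (Fin n)} {σ : Equiv.Perm (Fin m)}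
    {τ : Equiv.Perm (Fin (n + m))} :
    IsShuffle π σ τ ↔ StrictMono (fun i => τ.symm (Fin.castAdd m (π i))) ∧
      StrictMono (fun j => τ.symm (Fin.natAdd n (σ j))) := by
  constructor
  · rintro ⟨a, b, ha, hb, hπ, hσ⟩
    have ha' : (fun i => τ.symm (Fin.castAdd m (π i))) = a :=
      funext fun i => τ.symm_apply_eq.2 (Fin.ext (by simp [hπ]))
    have hb' : (fun j => τ.symm (Fin.natAdd n (σ j))) = b :=
      funext fun j => τ.symm_apply_eq.2 (Fin.ext (by simp [hσ]))
    exact ⟨ha' ▸ ha, hb' ▸ hb⟩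
  · rintro ⟨ha, hb⟩
    exact ⟨_, _, ha, hb, by simp, by simp⟩

lemma isLinearExtension_appendRel_permOrd_iff {n m : ℕ} {π : Equiv.Perm (Fin n)}
    {σ : Equiv.Perm (Fin m)} {τ : Equiv.Perm (Fin (n + m))} :
    IsLinearExtension (appendRel (permOrd π) (permOrd σ)) τ ↔ IsShuffle π σ τ := by
  simp only [isShuffle_iff, IsLinearExtension, appendRel, Fin.forall_fin_add,
    finSumFinEquiv_symm_apply_castAdd, finSumFinEquiv_symm_apply_natAdd, Sum.liftRel_inl_inl,
    Sum.liftRel_inr_inr, Sum.not_liftRel_inl_inr, Sum.not_liftRel_inr_inl, false_imp_iff,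
    implies_true, and_true, true_and, forall_permOrd_imp_iff]
  rfl

/-- `L^{(q)}_π · L^{(q)}_σ = ∑_{τ ∈ π ⧢ σ̄} L^{(q)}_τ`. -/
theorem Lq_mul_Lq (q : ℂ) (n m : ℕ) (π : Equiv.Perm (Fin n)) (σ : Equiv.Perm (Fin m)) :
    Lq q π * Lq q σ = ∑ τ ∈ Finset.univ.filter (fun τ => IsShuffle π σ τ), Lq q τ := by
  rw [Lq, Lq, Gamma_mul_Gamma,
    Gamma_eq_sum_linearExtension q (appendRel_irrefl (permOrd_irrefl π) (permOrd_irrefl σ))]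
  simp_rw [isLinearExtension_appendRel_permOrd_iff]
  rfl
end
end

section
/- For every q ∈ ℂ and every π ∈ S_n: L^{(q)}_π = ∑ q^{#{j ∈ Des(π) : i_j = i_{j+1}}} (q+1)^{#{i_1, i_2, …, i_n}} x_{i_1} x_{i_2} ⋯ x_{i_n}, where the sum ranges over all weakly increasing sequences i_1 ≤ i_2 ≤ ⋯ ≤ i_n of positive integers such that i_{j−1} < i_{j+1} for every j ∈ Peak(π), and #{i_1,…,i_n} is the number of distinct values appearing in the sequence. -/
open Classical
noncomputable section

/-- The peak set `Peak(π) = {2 ≤ i ≤ n-1 : π_{i-1} < π_i > π_{i+1}}` of `π ∈ S_n`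
(positions 1-indexed). -/
def PeakPerm {n : ℕ} (π : Equiv.Perm (Fin n)) : Finset ℕ :=
  (Finset.range n).filter fun v =>
    ∃ (h0 : v - 2 < n) (h1 : v - 1 < n) (h2 : v < n),
      2 ≤ v ∧ π ⟨v - 2, h0⟩ < π ⟨v - 1, h1⟩ ∧ π ⟨v, h2⟩ < π ⟨v - 1, h1⟩

/-!
Read an enriched `<_π`-partition along the chain: `f (π a) = ±(s a + 1)` with signs `ε a`.
Since `<_π` is a chain, the enriched conditions only have to be checked between neighbours
`π a`, `π (a + 1)`. There they say that `s` is weakly increasing and that, whenever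
`s a = s (a + 1)`, an ascent of `π` forces `f (π (a + 1)) > 0` and a descent forces
`f (π a) < 0`. A position forced both ways is the middle of a peak `j` with
`s (j - 2) = s j`, which is what the peak condition rules out. Otherwise, summing `q ^ #negatives`
over the admissible signs gives a factor `q` for every descent tie, `1` for every ascent tie and
`1 + q` for every remaining position; there are `n - #ties` of these, which is the number of
distinct values of `s`.
-/

open Finset Equiv

namespace EnrichedPPartition

variable {n : ℕ}

theorem strictMono_iff_lt_adjacent {α : Type*} [Preorder α] {f : Fin n → α} :
    StrictMono f ↔ ∀ a (h : a + 1 < n), f ⟨a, by omega⟩ < f ⟨a + 1, h⟩ := by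
  cases n with
  | zero => exact ⟨fun _ a h => by omega, fun _ i => i.elim0⟩
  | succ m =>
    rw [Fin.strictMono_iff_lt_succ]
    exact ⟨fun h a ha => h ⟨a, by omega⟩, fun h i => h i (by omega)⟩

theorem monotone_iff_le_adjacent {α : Type*} [Preorder α] {f : Fin n → α} :
    Monotone f ↔ ∀ a (h : a + 1 < n), f ⟨a, by omega⟩ ≤ f ⟨a + 1, h⟩ := by
  cases n with
  | zero => exact ⟨fun _ a h => by omega, fun _ i => i.elim0⟩
  | succ m =>
    rw [Fin.monotone_iff_le_succ]
    exact ⟨fun h a ha => h ⟨a, by omega⟩, fun h i => h i (by omega)⟩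

theorem card_filter_val_add_mem (c : ℕ) {B : Finset ℕ} (hB : ∀ j ∈ B, c ≤ j ∧ j < n + c) :
    #{k : Fin n | (k : ℕ) + c ∈ B} = #B := by
  refine card_bij (fun k _ => (k : ℕ) + c) (fun k hk => (mem_filter.1 hk).2)
    (fun k _ l _ h => Fin.ext (by omega)) fun j hj => ?_
  obtain ⟨h1, h2⟩ := hB j hj
  exact ⟨⟨j - c, by omega⟩, mem_filter.2 ⟨mem_univ _, by simpa [Nat.sub_add_cancel h1] using hj⟩,
    by simp; omega⟩

section Signs

variable {ι : Type*} [Fintype ι]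

theorem card_filter_neither_add_card_add_card (A B : ι → Prop) [DecidablePred A]
    [DecidablePred B] (h : ∀ k, ¬(A k ∧ B k)) :
    #{k | ¬A k ∧ ¬B k} + #{k | A k} + #{k | B k} = Fintype.card ι := by
  have hor : #{k | A k ∨ B k} = #{k | A k} + #{k | B k} := by
    rw [filter_or, card_union_of_disjoint (disjoint_filter.2 fun k _ hA hB => h k ⟨hA, hB⟩)]
  have hsplit := card_filter_add_card_filter_not (s := univ) fun k => A k ∨ B k
  simp only [not_or, card_univ] at hsplit
  omega

theorem sum_forced_signs [DecidableEq ι] {R : Type*} [CommSemiring R] (A B : ι → Prop)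
    [DecidablePred A] [DecidablePred B] (q : R) :
    ∑ ε : ι → Bool,
        (if ∀ k, (A k → ε k = false) ∧ (B k → ε k = true) then q ^ #{k | ε k = true} else 0) =
      if ∀ k, ¬(A k ∧ B k) then q ^ #{k | B k} * (q + 1) ^ #{k | ¬A k ∧ ¬B k} else 0 := by
  have hfactor (ε : ι → Bool) :
      (if ∀ k, (A k → ε k = false) ∧ (B k → ε k = true) then q ^ #{k | ε k = true} else 0) =
        ∏ k, if (A k → ε k = false) ∧ (B k → ε k = true) then (if ε k = true then q else 1)
          else 0 := by
    rw [Fintype.prod_ite_zero, prod_ite, prod_const, prod_const_one, mul_one]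
  simp only [hfactor]
  rw [← Fintype.prod_sum fun k b =>
    if (A k → b = false) ∧ (B k → b = true) then (if b = true then q else 1) else 0]
  split_ifs with hdisj
  · have hk (k : ι) : (∑ b : Bool,
        if (A k → b = false) ∧ (B k → b = true) then (if b = true then q else 1) else 0) =
          if B k then q else if A k then 1 else q + 1 := by
      have := hdisj k
      by_cases hA : A k <;> by_cases hB : B k <;> simp_all
    rw [prod_congr rfl fun k _ => hk k, prod_ite, prod_const, prod_ite, prod_const_one, one_mul,
      prod_const, filter_filter]
    simp only [and_comm]
  · simp only [not_forall, not_not] at hdisj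
    obtain ⟨k, hA, hB⟩ := hdisj
    exact prod_eq_zero (mem_univ k) (by simp [hA, hB])

end Signs

/-- The enriched condition on a pair `i <_P j` says exactly that this key increases from `i` to
`j`: the first coordinate is the rank in `-1 < 1 < -2 < 2 < ⋯` used by `pmlt`, the second breaks
ties by position, increasingly for positive values and decreasingly for negative ones. Along a
chain the enriched conditions thus become strict monotonicity, which is transitive. -/
def enrichedKey (x : ℤ) (i : Fin n) : ℕ ×ₗ ℤ :=
  toLex (2 * x.natAbs + (if 0 < x then 1 else 0), if 0 < x then (i : ℤ) else -(i : ℤ))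

theorem enriched_pair_iff_enrichedKey_lt {x y : ℤ} (hx : x ≠ 0) {i j : Fin n} (hij : i ≠ j) :
    ((i < j → pmlt x y ∨ (x = y ∧ 0 < x)) ∧ (j < i → pmlt x y ∨ (x = y ∧ x < 0))) ↔
      enrichedKey x i < enrichedKey y j := by
  have hij' : (i : ℕ) ≠ j := Fin.val_ne_of_ne hij
  simp only [enrichedKey, Prod.Lex.toLex_lt_toLex, pmlt, Fin.lt_def]
  split_ifs <;> omega

theorem isEnriched_permOrd_iff (π : Perm (Fin n)) (f : Fin n → ℤ) :
    IsEnriched (permOrd π) f ↔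
      (∀ i, f i ≠ 0) ∧ StrictMono fun a => enrichedKey (f (π a)) (π a) := by
  refine and_congr_right fun hf => ⟨fun h a b hab => ?_, fun h i j hij => ?_⟩
  · refine (enriched_pair_iff_enrichedKey_lt (hf _) (π.injective.ne hab.ne)).1 (h _ _ ?_)
    simpa [permOrd] using hab
  · have hne : i ≠ j := fun e => (e ▸ hij : permOrd π j j).false
    simpa [enriched_pair_iff_enrichedKey_lt (hf i) hne] using h hij

def signed (b : Bool) (u : ℕ) : ℤ := if b then -((u : ℤ) + 1) else (u : ℤ) + 1

theorem signed_ne_zero (b : Bool) (u : ℕ) : signed b u ≠ 0 := by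
  cases b <;> simp [signed] <;> omega

theorem natAbs_signed (b : Bool) (u : ℕ) : (signed b u).natAbs = u + 1 := by
  cases b <;> simp [signed] <;> omega

theorem signed_neg_iff (b : Bool) (u : ℕ) : signed b u < 0 ↔ b = true := by
  cases b <;> simp [signed] <;> omega

theorem signed_inj {b c : Bool} {u v : ℕ} : signed b u = signed c v ↔ b = c ∧ u = v := by
  cases b <;> cases c <;> simp [signed] <;> omega

theorem signed_decide_natAbs {x : ℤ} (hx : x ≠ 0) : signed (decide (x < 0)) (x.natAbs - 1) = x := by
  by_cases h : x < 0 <;> simp [signed, h] <;> omega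

theorem enrichedKey_signed_lt_iff (b c : Bool) (u v : ℕ) {i j : Fin n} (hij : i ≠ j) :
    enrichedKey (signed b u) i < enrichedKey (signed c v) j ↔
      u < v ∨ u = v ∧ (i < j → c = false) ∧ (j < i → b = true) := by
  have hij' : (i : ℕ) ≠ j := Fin.val_ne_of_ne hij
  rw [Fin.lt_def, Fin.lt_def]
  cases b <;> cases c <;>
    simp only [enrichedKey, signed, Prod.Lex.toLex_lt_toLex, Bool.false_eq_true, Bool.true_eq_false,
      if_true, if_false, imp_false, implies_true, not_lt, true_and, and_true] <;>
    split_ifs <;> omega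

def signedFun (π : Perm (Fin n)) (s : Fin n → ℕ) (ε : Fin n → Bool) : Fin n → ℤ :=
  fun i => signed (ε (π.symm i)) (s (π.symm i))

@[simp]
theorem signedFun_apply_perm (π : Perm (Fin n)) (s : Fin n → ℕ) (ε : Fin n → Bool) (a : Fin n) :
    signedFun π s ε (π a) = signed (ε a) (s a) := by
  simp [signedFun]

theorem injective_signedFun (π : Perm (Fin n)) :
    Function.Injective fun p : (Fin n → ℕ) × (Fin n → Bool) => signedFun π p.1 p.2 := by
  rintro ⟨s, ε⟩ ⟨t, δ⟩ h
  have hsig a : ε a = δ a ∧ s a = t a := signed_inj.1 (by simpa using congr_fun h (π a))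
  exact Prod.ext (funext fun a => (hsig a).2) (funext fun a => (hsig a).1)

theorem nonvanishing_subset_range_signedFun (π : Perm (Fin n)) :
    {f : Fin n → ℤ | ∀ i, f i ≠ 0} ⊆
      Set.range fun p : (Fin n → ℕ) × (Fin n → Bool) => signedFun π p.1 p.2 := by
  intro f hf
  refine ⟨(fun a => (f (π a)).natAbs - 1, fun a => decide (f (π a) < 0)), funext fun i => ?_⟩
  simpa [signedFun] using signed_decide_natAbs (hf i)

theorem monomOf_signedFun (π : Perm (Fin n)) (s : Fin n → ℕ) (ε : Fin n → Bool) :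
    monomOf (signedFun π s ε) = ∑ j, Finsupp.single (s j) 1 := by
  simp only [monomOf, signedFun, natAbs_signed, Nat.add_sub_cancel]
  exact Equiv.sum_comp π.symm fun a => Finsupp.single (s a) 1

theorem negCount_signedFun (π : Perm (Fin n)) (s : Fin n → ℕ) (ε : Fin n → Bool) :
    negCount (signedFun π s ε) = #{k | ε k = true} := by
  simp only [negCount, signedFun, signed_neg_iff, card_filter]
  exact Equiv.sum_comp π.symm fun a => if ε a = true then 1 else 0

theorem isEnriched_signedFun_iff_adjacent (π : Perm (Fin n)) (s : Fin n → ℕ)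
    (ε : Fin n → Bool) :
    IsEnriched (permOrd π) (signedFun π s ε) ↔ ∀ a (h : a + 1 < n),
      s ⟨a, by omega⟩ < s ⟨a + 1, h⟩ ∨ s ⟨a, by omega⟩ = s ⟨a + 1, h⟩ ∧
        (π ⟨a, by omega⟩ < π ⟨a + 1, h⟩ → ε ⟨a + 1, h⟩ = false) ∧
        (π ⟨a + 1, h⟩ < π ⟨a, by omega⟩ → ε ⟨a, by omega⟩ = true) := by
  have hne : ∀ i, signedFun π s ε i ≠ 0 := fun i => signed_ne_zero _ _
  rw [isEnriched_permOrd_iff, and_iff_right hne, strictMono_iff_lt_adjacent]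
  simp only [signedFun_apply_perm]
  exact forall₂_congr fun a h =>
    enrichedKey_signed_lt_iff _ _ _ _ (π.injective.ne (by simp [Fin.ext_iff]))

/-- Steps are indexed as in `DesPerm`: step `j` joins the positions `j - 1` and `j`. -/
def IsTie (s : Fin n → ℕ) (j : ℕ) : Prop :=
  1 ≤ j ∧ ∀ (h1 : j - 1 < n) (h2 : j < n), s ⟨j - 1, h1⟩ = s ⟨j, h2⟩

def ties (s : Fin n → ℕ) : Finset ℕ := (range n).filter (IsTie s)

def descentTies (π : Perm (Fin n)) (s : Fin n → ℕ) : Finset ℕ :=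
  (range n).filter fun j => j ∈ DesPerm π ∧
    ∀ (h1 : j - 1 < n) (h2 : j < n), s ⟨j - 1, h1⟩ = s ⟨j, h2⟩

def ascentTies (π : Perm (Fin n)) (s : Fin n → ℕ) : Finset ℕ := (ties s).filter (· ∉ DesPerm π)

theorem mem_ties {s : Fin n → ℕ} {j : ℕ} (hj : j ∈ ties s) : 1 ≤ j ∧ j < n := by
  simp only [ties, mem_filter, mem_range, IsTie] at hj
  exact ⟨hj.2.1, hj.1⟩

theorem succ_mem_ties_iff (s : Fin n → ℕ) {a : ℕ} (h : a + 1 < n) :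
    a + 1 ∈ ties s ↔ s ⟨a, by omega⟩ = s ⟨a + 1, h⟩ := by
  simp only [ties, mem_filter, mem_range, IsTie]
  exact ⟨fun hj => hj.2.2 (by omega) h, fun heq => ⟨h, by omega, fun _ _ => heq⟩⟩

theorem isTie_of_lt_of_eq {s : Fin n → ℕ} (hs : Monotone s) {i j : ℕ} (hi : i < n) (hj : j < n)
    (hij : i < j) (heq : s ⟨i, hi⟩ = s ⟨j, hj⟩) : IsTie s j := by
  refine ⟨by omega, fun h1 h2 => ?_⟩
  have := hs (Fin.mk_le_mk.2 (by omega) : (⟨i, hi⟩ : Fin n) ≤ ⟨j - 1, h1⟩)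
  have := hs (Fin.mk_le_mk.2 (by omega) : (⟨j - 1, h1⟩ : Fin n) ≤ ⟨j, h2⟩)
  omega

theorem exists_not_isTie_eq (s : Fin n → ℕ) :
    ∀ m (hm : m < n), ∃ j, ∃ hj : j < n, ¬IsTie s j ∧ s ⟨j, hj⟩ = s ⟨m, hm⟩
  | 0, hm => ⟨0, hm, fun h => by have := h.1; omega, rfl⟩
  | m + 1, hm => by
    by_cases h : IsTie s (m + 1)
    · obtain ⟨j, hj, hnt, heq⟩ := exists_not_isTie_eq s m (by omega)
      exact ⟨j, hj, hnt, heq.trans (h.2 (by omega) hm)⟩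
    · exact ⟨m + 1, hm, h, rfl⟩

theorem card_image_add_card_ties {s : Fin n → ℕ} (hs : Monotone s) :
    #(univ.image s) + #(ties s) = n := by
  have himage : #((range n).filter fun j => ¬IsTie s j) = #(univ.image s) := by
    refine card_bij (fun j hj => s ⟨j, mem_range.1 (mem_filter.1 hj).1⟩)
      (fun _ _ => mem_image_of_mem _ (mem_univ _)) (fun i hi j hj heq => ?_) fun v hv => ?_
    · simp only [mem_filter, mem_range] at hi hj
      rcases lt_trichotomy i j with h | h | h
      exacts [absurd (isTie_of_lt_of_eq hs hi.1 hj.1 h heq) hj.2, h,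
        absurd (isTie_of_lt_of_eq hs hj.1 hi.1 h heq.symm) hi.2]
    · obtain ⟨⟨m, hm⟩, -, rfl⟩ := mem_image.1 hv
      obtain ⟨j, hj, hnt, heq⟩ := exists_not_isTie_eq s m hm
      exact ⟨j, mem_filter.2 ⟨mem_range.2 hj, hnt⟩, heq⟩
  rw [← himage, ties, add_comm, card_filter_add_card_filter_not, card_range]

theorem succ_mem_desPerm_iff (π : Perm (Fin n)) {a : ℕ} (h : a + 1 < n) :
    a + 1 ∈ DesPerm π ↔ π ⟨a + 1, h⟩ < π ⟨a, by omega⟩ := by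
  simp [DesPerm, h, show a < n by omega]

theorem one_le_of_mem_desPerm {π : Perm (Fin n)} {j : ℕ} (hj : j ∈ DesPerm π) : 1 ≤ j := by
  simp only [DesPerm, mem_filter] at hj
  obtain ⟨-, -, -, h, -⟩ := hj
  exact h

theorem filter_ties_mem_desPerm (π : Perm (Fin n)) (s : Fin n → ℕ) :
    (ties s).filter (· ∈ DesPerm π) = descentTies π s := by
  ext j
  simp only [descentTies, ties, IsTie, mem_filter]
  exact ⟨fun ⟨⟨hj, _, he⟩, hd⟩ => ⟨hj, hd, he⟩,
    fun ⟨hj, hd, he⟩ => ⟨⟨hj, one_le_of_mem_desPerm hd, he⟩, hd⟩⟩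

theorem mem_ties_of_mem_descentTies {π : Perm (Fin n)} {s : Fin n → ℕ} {j : ℕ}
    (hj : j ∈ descentTies π s) : j ∈ ties s :=
  (mem_filter.1 ((filter_ties_mem_desPerm π s).symm ▸ hj)).1

theorem succ_mem_descentTies_iff (π : Perm (Fin n)) (s : Fin n → ℕ) {a : ℕ} (h : a + 1 < n) :
    a + 1 ∈ descentTies π s ↔ s ⟨a, by omega⟩ = s ⟨a + 1, h⟩ ∧ π ⟨a + 1, h⟩ < π ⟨a, by omega⟩ := by
  rw [← filter_ties_mem_desPerm, mem_filter, succ_mem_ties_iff s h, succ_mem_desPerm_iff π h]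

theorem succ_mem_ascentTies_iff (π : Perm (Fin n)) (s : Fin n → ℕ) {a : ℕ} (h : a + 1 < n) :
    a + 1 ∈ ascentTies π s ↔ s ⟨a, by omega⟩ = s ⟨a + 1, h⟩ ∧ π ⟨a, by omega⟩ < π ⟨a + 1, h⟩ := by
  rw [ascentTies, mem_filter, succ_mem_ties_iff s h, succ_mem_desPerm_iff π h]
  exact and_congr_right fun _ => ⟨fun hn => (not_lt.1 hn).lt_of_ne
    (π.injective.ne (by simp [Fin.ext_iff])), fun hlt => not_lt.2 hlt.le⟩

theorem isEnriched_signedFun_iff (π : Perm (Fin n)) (s : Fin n → ℕ) (ε : Fin n → Bool) :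
    IsEnriched (permOrd π) (signedFun π s ε) ↔
      Monotone s ∧ ∀ k : Fin n, ((k : ℕ) ∈ ascentTies π s → ε k = false) ∧
        ((k : ℕ) + 1 ∈ descentTies π s → ε k = true) := by
  rw [isEnriched_signedFun_iff_adjacent]
  constructor
  · intro hstep
    refine ⟨monotone_iff_le_adjacent.2 fun a h => ?_, fun ⟨k, hk⟩ => ⟨fun hA => ?_, fun hB => ?_⟩⟩
    · rcases hstep a h with hlt | ⟨heq, -⟩
      exacts [hlt.le, heq.le]
    · obtain ⟨a, rfl⟩ := Nat.exists_eq_add_of_le' (mem_ties (mem_filter.1 hA).1).1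
      obtain ⟨heq, hasc⟩ := (succ_mem_ascentTies_iff π s hk).1 hA
      rcases hstep a hk with hlt | ⟨-, hpos, -⟩
      exacts [absurd heq hlt.ne, hpos hasc]
    · have h := (mem_ties (mem_ties_of_mem_descentTies hB)).2
      obtain ⟨heq, hdes⟩ := (succ_mem_descentTies_iff π s h).1 hB
      rcases hstep k h with hlt | ⟨-, -, hneg⟩
      exacts [absurd heq hlt.ne, hneg hdes]
  · rintro ⟨hmono, hforced⟩ a h
    rcases (monotone_iff_le_adjacent.1 hmono a h).lt_or_eq with hlt | heq
    · exact Or.inl hlt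
    · exact Or.inr ⟨heq,
        fun hasc => (hforced ⟨a + 1, h⟩).1 ((succ_mem_ascentTies_iff π s h).2 ⟨heq, hasc⟩),
        fun hdes => (hforced ⟨a, by omega⟩).2 ((succ_mem_descentTies_iff π s h).2 ⟨heq, hdes⟩)⟩

theorem add_two_mem_peakPerm_iff (π : Perm (Fin n)) {a : ℕ} (h : a + 2 < n) :
    a + 2 ∈ PeakPerm π ↔
      π ⟨a, by omega⟩ < π ⟨a + 1, by omega⟩ ∧ π ⟨a + 2, h⟩ < π ⟨a + 1, by omega⟩ := by
  simp [PeakPerm, h, show a < n by omega, show a + 1 < n by omega]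

theorem forall_peak_lt_iff (π : Perm (Fin n)) {s : Fin n → ℕ} (hs : Monotone s) :
    (∀ j ∈ PeakPerm π, ∀ (h0 : j - 2 < n) (h2 : j < n), s ⟨j - 2, h0⟩ < s ⟨j, h2⟩) ↔
      ∀ k : Fin n, ¬((k : ℕ) ∈ ascentTies π s ∧ (k : ℕ) + 1 ∈ descentTies π s) := by
  constructor
  · rintro hpeak ⟨k, hk⟩ ⟨hA, hB⟩
    obtain ⟨a, rfl⟩ := Nat.exists_eq_add_of_le' (mem_ties (mem_filter.1 hA).1).1
    have h := (mem_ties (mem_ties_of_mem_descentTies hB)).2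
    obtain ⟨heq₁, hasc⟩ := (succ_mem_ascentTies_iff π s hk).1 hA
    obtain ⟨heq₂, hdes⟩ := (succ_mem_descentTies_iff π s h).1 hB
    exact (hpeak (a + 2) ((add_two_mem_peakPerm_iff π h).2 ⟨hasc, hdes⟩) (by omega) h).ne
      (heq₁.trans heq₂)
  · intro hdisj j hj h0 h2
    obtain ⟨a, rfl⟩ : ∃ a, j = a + 2 := ⟨j - 2, by
      simp only [PeakPerm, mem_filter] at hj
      omega⟩
    obtain ⟨hasc, hdes⟩ := (add_two_mem_peakPerm_iff π h2).1 hj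
    by_contra hge
    simp only [Nat.add_sub_cancel] at hge
    have h₁ : s ⟨a, by omega⟩ ≤ s ⟨a + 1, by omega⟩ := hs (Fin.mk_le_mk.2 (by omega))
    have h₂ : s ⟨a + 1, by omega⟩ ≤ s ⟨a + 1 + 1, h2⟩ := hs (Fin.mk_le_mk.2 (by omega))
    have h₂' : s ⟨a + 1 + 1, h2⟩ = s ⟨a + 2, h2⟩ := rfl
    exact hdisj ⟨a + 1, by omega⟩ ⟨(succ_mem_ascentTies_iff π s _).2 ⟨by omega, hasc⟩,
      (succ_mem_descentTies_iff π s h2).2 ⟨by omega, hdes⟩⟩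

theorem sum_isEnriched_signedFun (q : ℂ) (π : Perm (Fin n)) (s : Fin n → ℕ) :
    ∑ ε : Fin n → Bool,
        (if IsEnriched (permOrd π) (signedFun π s ε) then q ^ #{k | ε k = true} else 0) =
      if Monotone s ∧ ∀ j ∈ PeakPerm π, ∀ (h0 : j - 2 < n) (h2 : j < n), s ⟨j - 2, h0⟩ < s ⟨j, h2⟩
      then q ^ #(descentTies π s) * (q + 1) ^ #(univ.image s) else 0 := by
  simp only [isEnriched_signedFun_iff]
  by_cases hs : Monotone s
  swap
  · simp [hs]
  simp only [hs, true_and, forall_peak_lt_iff π hs]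
  have hdesc : #{k : Fin n | (k : ℕ) + 1 ∈ descentTies π s} = #(descentTies π s) :=
    card_filter_val_add_mem 1 fun j hj => by
      have := mem_ties (mem_ties_of_mem_descentTies hj)
      omega
  convert sum_forced_signs (fun k : Fin n => (k : ℕ) ∈ ascentTies π s)
    (fun k => (k : ℕ) + 1 ∈ descentTies π s) q using 4
  · exact hdesc.symm
  next hdisj =>
    have hasc : #{k : Fin n | (k : ℕ) ∈ ascentTies π s} = #(ascentTies π s) :=
      card_filter_val_add_mem 0 fun j hj => ⟨j.zero_le, (mem_ties (mem_filter.1 hj).1).2⟩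
    have hfree := card_filter_neither_add_card_add_card _ _ hdisj
    have hties : #(descentTies π s) + #(ascentTies π s) = #(ties s) := by
      rw [← filter_ties_mem_desPerm]
      exact card_filter_add_card_filter_not _
    have himage := card_image_add_card_ties hs
    rw [Fintype.card_fin] at hfree
    omega

theorem finite_setOf_sum_single_eq (d : ℕ →₀ ℕ) :
    {s : Fin n → ℕ | ∑ j, Finsupp.single (s j) 1 = d}.Finite := by
  refine (Set.Finite.pi fun _ => d.support.finite_toSet).subset fun s hs j _ => ?_
  have hle : Finsupp.single (s j) 1 ≤ d :=
    hs ▸ single_le_sum (f := fun i => Finsupp.single (s i) 1) (fun _ _ => zero_le) (mem_univ j)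
  have := Finsupp.single_le_iff.1 hle
  exact Finsupp.mem_support_iff.2 (by omega)

theorem Lq_apply_eq_tsum_signedFun (q : ℂ) (π : Perm (Fin n)) (d : ℕ →₀ ℕ) :
    Lq q π d = ∑' p : (Fin n → ℕ) × (Fin n → Bool),
      if IsEnriched (permOrd π) (signedFun π p.1 p.2) then
        (if ∑ j, Finsupp.single (p.1 j) 1 = d then q ^ #{k | p.2 k = true} else 0) else 0 := by
  have hsupp : Function.support ({f | IsEnriched (permOrd π) f}.indicator
      fun f => if monomOf f = d then q ^ negCount f else 0) ⊆
        Set.range fun p : (Fin n → ℕ) × (Fin n → Bool) => signedFun π p.1 p.2 :=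
    fun f hf => nonvanishing_subset_range_signedFun π (Set.support_indicator_subset hf).1
  refine (_root_.tsum_subtype {f | IsEnriched (permOrd π) f}
    fun f => if monomOf f = d then q ^ negCount f else 0).trans ?_
  rw [← (injective_signedFun π).tsum_eq hsupp]
  simp only [Set.indicator_apply, Set.mem_ofPred_eq, monomOf_signedFun, negCount_signedFun]

end EnrichedPPartition

open EnrichedPPartition in
/-- A weakly increasing sequence `i_1 ≤ ⋯ ≤ i_n` of positive integers is encoded as a monotone
map `s : Fin n → ℕ` with `i_j = s (j-1) + 1`, so that `x_{i_j}` is the variable indexed by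
`s (j-1)`. -/
theorem Lq_eq_peak_expansion (q : ℂ) (n : ℕ) (π : Equiv.Perm (Fin n)) :
    Lq q π =
      (fun d => ∑' s : {s : Fin n → ℕ // Monotone s ∧
          ∀ j ∈ PeakPerm π, ∀ (h0 : j - 2 < n) (h2 : j < n), s ⟨j - 2, h0⟩ < s ⟨j, h2⟩},
        if (∑ j, Finsupp.single (s.1 j) 1) = d then
          q ^ ((Finset.range n).filter (fun j => j ∈ DesPerm π ∧
                ∀ (h1 : j - 1 < n) (h2 : j < n), s.1 ⟨j - 1, h1⟩ = s.1 ⟨j, h2⟩)).card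
          * (q + 1) ^ (Finset.univ.image s.1).card
        else 0 : MvPowerSeries ℕ ℂ) := by
  funext d
  have hsummable : Summable fun p : (Fin n → ℕ) × (Fin n → Bool) =>
      if IsEnriched (permOrd π) (signedFun π p.1 p.2) then
        (if ∑ j, Finsupp.single (p.1 j) 1 = d then q ^ #{k | p.2 k = true} else 0) else 0 := by
    refine summable_of_hasFiniteSupport
      (((finite_setOf_sum_single_eq d).prod Set.finite_univ).subset fun p hp =>
        ⟨by_contra fun hd => hp (by simp [Set.notMem_ofPred_iff.1 hd]), Set.mem_univ _⟩)
  rw [Lq_apply_eq_tsum_signedFun, hsummable.tsum_prod' fun _ => Summable.of_finite]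
  refine (tsum_congr fun s => ?_).trans (_root_.tsum_subtype {s : Fin n → ℕ | Monotone s ∧
    ∀ j ∈ PeakPerm π, ∀ (h0 : j - 2 < n) (h2 : j < n), s ⟨j - 2, h0⟩ < s ⟨j, h2⟩} fun s =>
    if ∑ j, Finsupp.single (s j) 1 = d then
      q ^ #(descentTies π s) * (q + 1) ^ #(univ.image s) else 0).symm
  simp only [tsum_fintype, Set.indicator_apply, Set.mem_ofPred_eq]
  by_cases hd : ∑ j, Finsupp.single (s j) 1 = d
  · simp only [hd, if_true]
    exact sum_isEnriched_signedFun q π s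
  · simp [hd]
end
end

section
/- Let ≺ be any total order on ℙ^± and define the binary relation R on ℙ^± by i R j iff (i ≼ j and not i = j ∈ −ℙ). Then for every integer n, H_n = ∑_{k=0}^{n} ∑_{U} ∑_{V} (∏_{u ∈ U} x_u)(∏_{v ∈ V} x_v), where U ranges over the size-k subsets of −ℙ and V over the size-(n−k) multisubsets of ℙ (the product over v ∈ V taking each element with its multiplicity). In particular, H_n does not depend on the choice of the total order ≺. -/
open Classical
noncomputable section

/-- The relation `R` built from a (strict) total order `slt` on `ℙ^±`:
`i R j` iff `i ≼ j` but not `i = j ∈ -ℙ`. -/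
def Rof (slt : ℤ → ℤ → Prop) (a b : ℤ) : Prop :=
  (slt a b ∨ a = b) ∧ ¬(a = b ∧ a < 0)

/-- `w` is a tuple `(i_1, …, i_{nt}) ∈ (ℙ^±)^{nt}` with `i_1 R i_2 R ⋯ R i_{nt}`. -/
def IsRWord (R : ℤ → ℤ → Prop) (nt : ℕ) (w : Fin nt → ℤ) : Prop :=
  (∀ i, w i ≠ 0) ∧ ∀ i j : Fin nt, (i : ℕ) + 1 = (j : ℕ) → R (w i) (w j)

/-- The exponent vector of the monomial `x_{f 1} ⋯ x_{f n}` in the alphabet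
`X^± = {x_i : i ∈ ℤ, i ≠ 0}`. -/
def monomPM {n : ℕ} (f : Fin n → ℤ) : ℤ →₀ ℕ :=
  ∑ i, Finsupp.single (f i) 1

/-- `H_n = ∑ x_{i_1} x_{i_2} ⋯ x_{i_n}`, summed over all `R`-chains
`i_1 R i_2 R ⋯ R i_n` in `ℙ^±`; `H_n = 0` for `n < 0`. -/
def Hser (R : ℤ → ℤ → Prop) (n : ℤ) : MvPowerSeries ℤ ℂ :=
  if n < 0 then 0 else
    fun d => ∑' w : {w : Fin n.toNat → ℤ // IsRWord R n.toNat w},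
      if monomPM w.1 = d then 1 else 0

/-- `∑_U ∏_{u ∈ U} x_u`, `U` ranging over the size-`k` subsets of `-ℙ`
(the elementary symmetric function in the negatively-indexed variables). -/
def eNeg (k : ℕ) : MvPowerSeries ℤ ℂ :=
  fun d => if ((∀ i, d i ≠ 0 → i < 0) ∧ (∀ i, d i ≤ 1) ∧ d.sum (fun _ v => v) = k)
    then 1 else 0

/-- `∑_V ∏_{v ∈ V} x_v`, `V` ranging over the size-`m` multisubsets of `ℙ`
(the complete homogeneous symmetric function in the positively-indexed variables). -/
def hPos (m : ℕ) : MvPowerSeries ℤ ℂ :=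
  fun d => if ((∀ i, d i ≠ 0 → 0 < i) ∧ d.sum (fun _ v => v) = m) then 1 else 0

/-!
An `R`-chain is determined by its multiset of letters. Indeed `R` is transitive on nonzero
letters (a cycle `a ≼ b ≼ a` forces `a = b`, which `R` forbids for negative `a`), so an
`R`-chain is a list sorted for `≼` in which no negative letter occurs twice; conversely sorting
any such multiset gives an `R`-chain. Hence the coefficient of `H_n` at a monomial is `1` if the
monomial is `x_U x_V` with `U ⊆ -ℙ` a set, `V` a multiset on `ℙ` and `|U| + |V| = n`, and `0`
otherwise. Splitting such a monomial into its negative and positive parts shows that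
`∑_k e_k(x_-) h_{n-k}(x_+)` has the same coefficients.
-/

theorem List.pairwise_not_eq_and_iff {α : Type*} [DecidableEq α] {p : α → Prop} [DecidablePred p]
    {l : List α} : l.Pairwise (fun a b => ¬(a = b ∧ p a)) ↔ ∀ a, p a → l.count a ≤ 1 := by
  have hnodup : l.Pairwise (fun a b => ¬(a = b ∧ p a)) ↔ (l.filter (p ·)).Nodup := by
    rw [List.Nodup, List.pairwise_filter]
    refine List.Pairwise.iff fun a b => ?_
    simp only [decide_eq_true_eq]
    constructor
    · rintro h ha - rfl; exact h ⟨rfl, ha⟩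
    · rintro h ⟨rfl, ha⟩; exact h ha ha rfl
  rw [hnodup, List.nodup_iff_count_le_one]
  refine forall_congr' fun a => ?_
  by_cases ha : p a
  · simp [List.count_filter, ha]
  · simp [ha, List.count_eq_zero_of_not_mem, List.mem_filter]

theorem tsum_ite_eq_of_injective {α β M : Type*} [AddCommMonoid M] [TopologicalSpace M]
    [DecidableEq β] {f : α → β} (hf : Function.Injective f) (b : β) (x : M) :
    ∑' a, (if f a = b then x else 0) = if b ∈ Set.range f then x else 0 := by
  by_cases hb : b ∈ Set.range f
  · obtain ⟨a, rfl⟩ := hb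
    simp_rw [hf.eq_iff]
    rw [tsum_ite_eq, if_pos (Set.mem_range_self a)]
  · rw [if_neg hb]
    exact (tsum_congr fun a => if_neg fun h => hb ⟨a, h⟩).trans tsum_zero

theorem Finsupp.sum_fun_id_eq_degree {σ : Type*} (d : σ →₀ ℕ) : d.sum (fun _ v => v) = d.degree :=
  rfl

theorem monomPM_eq_toFinsupp {n : ℕ} (w : Fin n → ℤ) :
    monomPM w = Multiset.toFinsupp (List.ofFn w) := by
  rw [monomPM, ← Fin.univ_val_map, ← Multiset.sum_map_singleton (Multiset.map w _), map_multiset_sum]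
  simp [Finset.sum_eq_multiset_sum, Function.comp_def]

theorem monomPM_apply {n : ℕ} (w : Fin n → ℤ) (a : ℤ) : monomPM w a = (List.ofFn w).count a := by
  rw [monomPM_eq_toFinsupp, Multiset.toFinsupp_apply, Multiset.coe_count]

theorem degree_monomPM {n : ℕ} (w : Fin n → ℤ) : (monomPM w).degree = n := by
  rw [monomPM, map_sum]
  simp

/-- The exponent vectors of the monomials `x_U x_V` with `U ⊆ -ℙ` a set, `V` a multiset
on `ℙ` and `|U| + |V| = n`. -/
def IsSuperExponent (n : ℕ) (d : ℤ →₀ ℕ) : Prop :=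
  d 0 = 0 ∧ (∀ i < 0, d i ≤ 1) ∧ d.degree = n

theorem add_eq_and_neg_pos_support_iff {d e f : ℤ →₀ ℕ} :
    (e + f = d ∧ (∀ i, e i ≠ 0 → i < 0) ∧ ∀ i, f i ≠ 0 → 0 < i) ↔
      d 0 = 0 ∧ e = d.filter (· < 0) ∧ f = d.filter (0 < ·) := by
  simp only [Finsupp.ext_iff, Finsupp.add_apply, Finsupp.filter_apply]
  constructor
  · rintro ⟨hd, he, hf⟩
    have he' := fun i => not_imp_comm.1 (he i)
    have hf' := fun i => not_imp_comm.1 (hf i)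
    refine ⟨by simp [← hd, he', hf'], fun i => ?_, fun i => ?_⟩ <;>
      split_ifs with hi <;> grind
  · rintro ⟨hd0, he, hf⟩
    refine ⟨fun i => ?_, fun i => ?_, fun i => ?_⟩ <;> simp only [he, hf] <;> split_ifs <;> grind

theorem degree_filter_neg_add_degree_filter_pos {d : ℤ →₀ ℕ} (hd0 : d 0 = 0) :
    (d.filter (· < 0)).degree + (d.filter (0 < ·)).degree = d.degree := by
  rw [← map_add, (add_eq_and_neg_pos_support_iff.2 ⟨hd0, rfl, rfl⟩).1]

open Finset.HasAntidiagonal in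
theorem coeff_eNeg_mul_hPos (k m : ℕ) (d : ℤ →₀ ℕ) :
    MvPowerSeries.coeff d (eNeg k * hPos m) =
      if d 0 = 0 ∧ (∀ i < 0, d i ≤ 1) ∧ (d.filter (· < 0)).degree = k ∧
        (d.filter (0 < ·)).degree = m then 1 else 0 := by
  set q : (ℤ →₀ ℕ) × (ℤ →₀ ℕ) := (d.filter (· < 0), d.filter (0 < ·))
  set C := d 0 = 0 ∧ (∀ i < 0, d i ≤ 1) ∧ q.1.degree = k ∧ q.2.degree = m
  have hterm : ∀ p ∈ antidiagonal d,
      MvPowerSeries.coeff p.1 (eNeg k) * MvPowerSeries.coeff p.2 (hPos m) =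
        if p = q ∧ C then 1 else 0 := by
    rintro ⟨e, f⟩ hp
    rw [mem_antidiagonal] at hp
    simp only [MvPowerSeries.coeff_apply, eNeg, hPos, ite_zero_mul_ite_zero, one_mul]
    refine if_congr ?_ rfl rfl
    simp only [Prod.mk.injEq, Finsupp.sum_fun_id_eq_degree, C, q]
    constructor
    · rintro ⟨⟨he, he1, rfl⟩, hf, rfl⟩
      obtain ⟨hd0, rfl, rfl⟩ := add_eq_and_neg_pos_support_iff.1 ⟨hp, he, hf⟩
      refine ⟨⟨rfl, rfl⟩, hd0, fun i hi => ?_, rfl, rfl⟩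
      simpa [Finsupp.filter_apply, hi] using he1 i
    · rintro ⟨⟨rfl, rfl⟩, hd0, hneg, rfl, rfl⟩
      obtain ⟨-, he, hf⟩ := add_eq_and_neg_pos_support_iff.2 ⟨hd0, rfl, rfl⟩
      refine ⟨⟨he, fun i => ?_, rfl⟩, hf, rfl⟩
      rw [Finsupp.filter_apply]
      split_ifs with hi
      exacts [hneg i hi, zero_le_one]
  rw [MvPowerSeries.coeff_mul, Finset.sum_congr rfl fun p hp => (hterm p hp).trans (ite_and ..),
    Finset.sum_ite_eq']
  by_cases hC : C
  · have hq : q ∈ antidiagonal d :=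
      mem_antidiagonal.2 (add_eq_and_neg_pos_support_iff.2 ⟨hC.1, rfl, rfl⟩).1
    rw [if_pos hq]
  · rw [if_neg hC, ite_self]

theorem coeff_sum_eNeg_mul_hPos (n : ℕ) (d : ℤ →₀ ℕ) :
    MvPowerSeries.coeff d (∑ k ∈ Finset.range (n + 1), eNeg k * hPos (n - k)) =
      if IsSuperExponent n d then 1 else 0 := by
  set a := (d.filter (· < 0)).degree
  have hterm : ∀ k ∈ Finset.range (n + 1), MvPowerSeries.coeff d (eNeg k * hPos (n - k)) =
      if a = k then (if IsSuperExponent n d then 1 else 0) else 0 := by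
    intro k hk
    rw [coeff_eNeg_mul_hPos, ← ite_and]
    refine if_congr ?_ rfl rfl
    rw [Finset.mem_range] at hk
    constructor
    · rintro ⟨hd0, hneg, rfl, hb⟩
      have := degree_filter_neg_add_degree_filter_pos hd0
      exact ⟨rfl, hd0, hneg, by omega⟩
    · rintro ⟨rfl, hd0, hneg, hdeg⟩
      have := degree_filter_neg_add_degree_filter_pos hd0
      exact ⟨hd0, hneg, rfl, by omega⟩
  rw [map_sum, Finset.sum_congr rfl hterm, Finset.sum_ite_eq]
  by_cases hd : IsSuperExponent n d
  · obtain ⟨hd0, -, hdeg⟩ := hd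
    have := degree_filter_neg_add_degree_filter_pos hd0
    rw [if_pos (Finset.mem_range.2 (by omega))]
  · rw [if_neg hd, ite_self]

/-- `0` is made a bottom element, so that the reflexive closure of `slt` extends to a total order
on all of `ℤ`, as `Multiset.sort` requires. -/
def extLE (slt : ℤ → ℤ → Prop) (a b : ℤ) : Prop :=
  a = 0 ∨ b ≠ 0 ∧ (slt a b ∨ a = b)

def chainRel (slt : ℤ → ℤ → Prop) (a b : ℤ) : Prop :=
  extLE slt a b ∧ ¬(a = b ∧ a < 0)

theorem rof_iff_chainRel {slt : ℤ → ℤ → Prop} {a b : ℤ} (ha : a ≠ 0) (hb : b ≠ 0) :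
    Rof slt a b ↔ chainRel slt a b := by
  simp [Rof, chainRel, extLE, ha, hb]

section Chains

variable {slt : ℤ → ℤ → Prop}
  (htrans : ∀ a b c : ℤ, a ≠ 0 → b ≠ 0 → c ≠ 0 → slt a b → slt b c → slt a c)
  (hirr : ∀ a : ℤ, a ≠ 0 → ¬ slt a a)
  (htot : ∀ a b : ℤ, a ≠ 0 → b ≠ 0 → a ≠ b → slt a b ∨ slt b a)

include htrans in
theorem extLE_isTrans : IsTrans ℤ (extLE slt) := by
  refine ⟨fun a b c hab hbc => ?_⟩
  rcases eq_or_ne a 0 with ha | ha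
  · exact .inl ha
  obtain ⟨hb, hab⟩ := hab.resolve_left ha
  obtain ⟨hc, hbc⟩ := hbc.resolve_left hb
  refine .inr ⟨hc, ?_⟩
  rcases hab with hab | rfl
  · rcases hbc with hbc | rfl
    · exact .inl (htrans a b c ha hb hc hab hbc)
    · exact .inl hab
  · exact hbc

include htrans hirr in
theorem extLE_antisymm : Std.Antisymm (extLE slt) := by
  refine ⟨fun a b hab hba => ?_⟩
  rcases eq_or_ne a 0 with rfl | ha
  · rcases hba with rfl | ⟨h0, _⟩
    · rfl
    · exact absurd rfl h0
  obtain ⟨hb, hab⟩ := hab.resolve_left ha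
  obtain ⟨-, hba⟩ := hba.resolve_left hb
  rcases hab with hab | rfl
  · rcases hba with hba | rfl
    · exact absurd (htrans a b a ha hb ha hab hba) (hirr a ha)
    · rfl
  · rfl

include htot in
theorem extLE_total : Std.Total (extLE slt) := by
  refine ⟨fun a b => ?_⟩
  rcases eq_or_ne a 0 with ha | ha
  · exact .inl (.inl ha)
  rcases eq_or_ne b 0 with hb | hb
  · exact .inr (.inl hb)
  rcases eq_or_ne a b with rfl | hab
  · exact .inl (.inr ⟨hb, .inr rfl⟩)
  rcases htot a b ha hb hab with h | h
  · exact .inl (.inr ⟨hb, .inl h⟩)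
  · exact .inr (.inr ⟨ha, .inl h⟩)

include htrans hirr in
theorem chainRel_isTrans : IsTrans ℤ (chainRel slt) := by
  have := extLE_isTrans htrans
  have := extLE_antisymm htrans hirr
  refine ⟨fun a b c ⟨hab, hab'⟩ ⟨hbc, _⟩ => ⟨_root_.trans hab hbc, ?_⟩⟩
  rintro ⟨rfl, ha⟩
  exact hab' ⟨antisymm hab hbc, ha⟩

include htrans hirr in
theorem isRWord_rof_iff {n : ℕ} {w : Fin n → ℤ} :
    IsRWord (Rof slt) n w ↔ (∀ i, w i ≠ 0) ∧ (List.ofFn w).Pairwise (extLE slt) ∧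
      ∀ a < 0, (List.ofFn w).count a ≤ 1 := by
  have := chainRel_isTrans htrans hirr
  rw [← List.pairwise_not_eq_and_iff, ← List.pairwise_and_iff, IsRWord]
  refine and_congr_right fun hw => ?_
  change _ ↔ (List.ofFn w).Pairwise (chainRel slt)
  rw [← List.isChain_iff_pairwise, List.isChain_ofFn]
  refine ⟨fun h i hi => (rof_iff_chainRel (hw _) (hw _)).1 (h _ _ rfl), ?_⟩
  rintro h ⟨i, hi⟩ ⟨j, hj⟩ (rfl : i + 1 = j)
  exact (rof_iff_chainRel (hw _) (hw _)).2 (h i hj)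

include htrans hirr in
theorem IsRWord.isSuperExponent {n : ℕ} {w : Fin n → ℤ} (hw : IsRWord (Rof slt) n w) :
    IsSuperExponent n (monomPM w) := by
  obtain ⟨hnz, -, hneg⟩ := (isRWord_rof_iff htrans hirr).1 hw
  refine ⟨?_, fun a ha => (monomPM_apply w a).symm ▸ hneg a ha, degree_monomPM w⟩
  rw [monomPM_apply, List.count_eq_zero, List.mem_ofFn]
  rintro ⟨i, hi⟩
  exact hnz i hi

include htrans hirr in
theorem IsRWord.eq_of_monomPM_eq {n : ℕ} {w w' : Fin n → ℤ} (hw : IsRWord (Rof slt) n w)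
    (hw' : IsRWord (Rof slt) n w') (h : monomPM w = monomPM w') : w = w' := by
  have := extLE_antisymm htrans hirr
  refine List.ofFn_injective (List.Perm.eq_of_pairwise' ((isRWord_rof_iff htrans hirr).1 hw).2.1
    ((isRWord_rof_iff htrans hirr).1 hw').2.1 ?_)
  rw [← Multiset.coe_eq_coe]
  exact Multiset.toFinsupp.injective (by rwa [← monomPM_eq_toFinsupp, ← monomPM_eq_toFinsupp])

include htrans hirr htot in
theorem exists_isRWord_monomPM_eq {n : ℕ} {d : ℤ →₀ ℕ} (hd : IsSuperExponent n d) :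
    ∃ w : Fin n → ℤ, IsRWord (Rof slt) n w ∧ monomPM w = d := by
  have := extLE_isTrans htrans
  have := extLE_antisymm htrans hirr
  have := extLE_total htot
  set L := (Finsupp.toMultiset d).sort (extLE slt)
  have hlen : L.length = n := by
    rw [Multiset.length_sort, Finsupp.card_toMultiset]
    exact hd.2.2
  obtain ⟨w, hwL⟩ : ∃ w : Fin n → ℤ, List.ofFn w = L := by
    subst hlen
    exact ⟨_, List.ofFn_getElem⟩
  have hwd : monomPM w = d := by
    rw [monomPM_eq_toFinsupp, hwL, Multiset.sort_eq, Finsupp.toMultiset_toFinsupp]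
  refine ⟨w, (isRWord_rof_iff htrans hirr).2 ⟨fun i h0 => ?_, hwL ▸ Multiset.pairwise_sort _ _,
    fun a ha => monomPM_apply w a ▸ hwd ▸ hd.2.1 a ha⟩, hwd⟩
  have hd0 := hd.1
  rw [← hwd, monomPM_apply, List.count_eq_zero] at hd0
  exact hd0 (List.mem_ofFn.2 ⟨i, h0⟩)

include htrans hirr htot in
theorem coeff_Hser_rof {n : ℤ} (hn : 0 ≤ n) (d : ℤ →₀ ℕ) :
    MvPowerSeries.coeff d (Hser (Rof slt) n) = if IsSuperExponent n.toNat d then 1 else 0 := by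
  have hinj : Function.Injective fun w : {w // IsRWord (Rof slt) n.toNat w} => monomPM w.1 :=
    fun w w' h => Subtype.ext (w.2.eq_of_monomPM_eq htrans hirr w'.2 h)
  have hrange : Set.range (fun w : {w // IsRWord (Rof slt) n.toNat w} => monomPM w.1) =
      {d | IsSuperExponent n.toNat d} := by
    ext d
    refine ⟨?_, fun hd => ?_⟩
    · rintro ⟨w, rfl⟩
      exact w.2.isSuperExponent htrans hirr
    · obtain ⟨w, hw, rfl⟩ := exists_isRWord_monomPM_eq htrans hirr htot hd
      exact ⟨⟨w, hw⟩, rfl⟩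
  rw [MvPowerSeries.coeff_apply, show Hser (Rof slt) n = _ from if_neg hn.not_gt]
  exact (tsum_ite_eq_of_injective hinj d 1).trans (if_congr (Set.ext_iff.1 hrange d) rfl rfl)

include htrans hirr htot in
theorem Hser_rof_eq (n : ℤ) :
    Hser (Rof slt) n =
      if n < 0 then 0 else ∑ k ∈ Finset.range (n.toNat + 1), eNeg k * hPos (n.toNat - k) := by
  split_ifs with hn
  · exact if_pos hn
  · ext d
    rw [coeff_Hser_rof htrans hirr htot (not_lt.1 hn), coeff_sum_eNeg_mul_hPos]

end Chains

/-- for any total order `≺` on `ℙ^±` (given by its strict part `slt`)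
and every integer `n`, `H_n = ∑_{k=0}^{n} (∑_U ∏_{u ∈ U} x_u)(∑_V ∏_{v ∈ V} x_v)`,
`U` over size-`k` subsets of `-ℙ` and `V` over size-`(n-k)` multisubsets of `ℙ`;
in particular `H_n` does not depend on the choice of `≺`. -/
theorem Hser_eq_sum_eNeg_hPos (slt : ℤ → ℤ → Prop)
    (htrans : ∀ a b c : ℤ, a ≠ 0 → b ≠ 0 → c ≠ 0 → slt a b → slt b c → slt a c)
    (hirr : ∀ a : ℤ, a ≠ 0 → ¬ slt a a)
    (htot : ∀ a b : ℤ, a ≠ 0 → b ≠ 0 → a ≠ b → slt a b ∨ slt b a)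
    (n : ℤ) :
    Hser (Rof slt) n =
      (if n < 0 then 0 else
        ∑ k ∈ Finset.range (n.toNat + 1), eNeg k * hPos (n.toNat - k)) ∧
    (∀ slt₂ : ℤ → ℤ → Prop,
      (∀ a b c : ℤ, a ≠ 0 → b ≠ 0 → c ≠ 0 → slt₂ a b → slt₂ b c → slt₂ a c) →
      (∀ a : ℤ, a ≠ 0 → ¬ slt₂ a a) →
      (∀ a b : ℤ, a ≠ 0 → b ≠ 0 → a ≠ b → slt₂ a b ∨ slt₂ b a) →
      Hser (Rof slt) n = Hser (Rof slt₂) n) :=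
  ⟨Hser_rof_eq htrans hirr htot n, fun _ htrans₂ hirr₂ htot₂ =>
    (Hser_rof_eq htrans hirr htot n).trans (Hser_rof_eq htrans₂ hirr₂ htot₂ n).symm⟩
end
end
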